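/- arXiv:2203.06789 — 3 statements merged into one kernel-verified Lean document; each statement's English description precedes it below -/
import Mathlib

section
/- For all integers n ≥ 2 and t with 2 ≤ t ≤ n, the sum of the signs of all permutations σ ∈ S_n with |supp(σ)| = t equals (−1)^{t−1}·(t−1)·C(n,t), where the sign of a permutation is 1 if it is even and −1 if it is odd, and C(n,t) is the binomial coefficient. -/
/-!
A permutation with support exactly `s` is `ofSubtype` of a derangement of `s`, with the same
sign. The signed count of derangements of a `k`-element set is the Leibniz expansion of
`det (J - 1)`, where `J` is the all-ones matrix, and the matrix determinant lemma gives
`det (J - 1) = (-1)^k (1 - k)`. Summing over the `C(n, t)` possible supports of size `t` finishes.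
-/

open Finset

/-- Adjacency matrix of the Cayley graph `Cay(S_n, S)`. -/
def adjMat (n : ℕ) (S : Finset (Equiv.Perm (Fin n))) :
    Matrix (Equiv.Perm (Fin n)) (Equiv.Perm (Fin n)) ℝ :=
  Matrix.of fun g h => if g⁻¹ * h ∈ S then 1 else 0

/-- `lam` is an eigenvalue of the Cayley graph `Cay(S_n, S)`. -/
def IsEig (n : ℕ) (S : Finset (Equiv.Perm (Fin n))) (lam : ℝ) : Prop :=
  ∃ v : Equiv.Perm (Fin n) → ℝ, v ≠ 0 ∧ (adjMat n S).mulVec v = lam • v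

/-- The number of fixed points of a permutation. -/
def fixCount (n : ℕ) (σ : Equiv.Perm (Fin n)) : ℕ :=
  (univ.filter fun i => σ i = i).card

/-- The eigenvalue of `Cay(S_n, S)` afforded by the standard representation. -/
noncomputable def stdEig (n : ℕ) (S : Finset (Equiv.Perm (Fin n))) : ℝ :=
  (1 / ((n : ℝ) - 1)) * ∑ σ ∈ S, ((fixCount n σ : ℝ) - 1)

/-- `Cay(S_n, S)` has the Aldous property. -/
def HasAldous (n : ℕ) (S : Finset (Equiv.Perm (Fin n))) : Prop :=
  stdEig n S < S.card ∧ IsEig n S (stdEig n S) ∧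
    ∀ lam : ℝ, IsEig n S lam → lam ≠ (S.card : ℝ) → lam ≤ stdEig n S

/-- `S` is a conjugacy class of `S_n`. -/
def IsConjClass (n : ℕ) (S : Finset (Equiv.Perm (Fin n))) : Prop :=
  ∃ σ : Equiv.Perm (Fin n), ∀ τ, τ ∈ S ↔ IsConj σ τ

/-- `T(n, I)`: the set of permutations whose support size lies in `I`. -/
def T (n : ℕ) (I : Finset ℕ) : Finset (Equiv.Perm (Fin n)) :=
  univ.filter fun σ => σ.support.card ∈ I

namespace Matrix

variable {n R : Type*} [Fintype n] [DecidableEq n] [CommRing R]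

theorem det_of_const_one_sub_one :
    det (of (fun _ _ => 1) - 1 : Matrix n n R) = (-1) ^ Fintype.card n * (1 - Fintype.card n) := by
  have h : (of (fun _ _ => 1) - 1 : Matrix n n R) =
      -(1 + replicateCol Unit (fun _ => (-1 : R)) * replicateRow Unit (fun _ => (1 : R))) := by
    ext i j
    simp [replicateCol, replicateRow, Matrix.mul_apply, sub_eq_add_neg]
  rw [h, det_neg, det_one_add_replicateCol_mul_replicateRow]
  simp [dotProduct, sub_eq_add_neg]

end Matrix

namespace Equiv.Perm

variable {α : Type*} [Fintype α] [DecidableEq α]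

theorem sum_sign_derangements :
    ∑ σ ∈ univ.filter (fun σ : Perm α => ∀ x, σ x ≠ x), (sign σ : ℤ) =
      (-1) ^ Fintype.card α * (1 - Fintype.card α) := by
  rw [← Matrix.det_of_const_one_sub_one, Matrix.det_apply, sum_filter]
  refine sum_congr rfl fun σ _ => ?_
  simp only [Matrix.sub_apply, Matrix.of_apply, Matrix.one_apply]
  have hprod : ∏ i, (1 - if σ i = i then 1 else 0 : ℤ) = if ∀ i, σ i ≠ i then 1 else 0 := by
    rw [← Fintype.prod_boole]
    exact prod_congr rfl fun i _ => by split_ifs <;> simp_all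
  rw [hprod, Units.smul_def, smul_eq_mul, mul_ite, mul_one, mul_zero]

theorem sum_sign_of_support_eq (s : Finset α) :
    ∑ σ ∈ univ.filter (fun σ : Perm α => σ.support = s), (sign σ : ℤ) =
      (-1) ^ #s * (1 - #s) := by
  rw [← Fintype.card_coe s, ← sum_sign_derangements]
  symm
  refine sum_bij (fun u _ => ofSubtype u) (fun u hu => ?_) (fun _ _ _ _ h => ofSubtype_injective h)
    (fun f hf => ?_) (fun u _ => by rw [sign_ofSubtype])
  · simp only [mem_filter, mem_univ, true_and] at hu ⊢
    ext x
    rw [mem_support_ofSubtype]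
    simp [hu]
  · simp only [mem_filter, mem_univ, true_and] at hf
    have hmem : ∀ x, f x ∈ s ↔ x ∈ s := fun x => hf ▸ apply_mem_support
    refine ⟨f.subtypePerm hmem, ?_, ofSubtype_subtypePerm hmem fun x hx => hf ▸ mem_support.2 hx⟩
    simp only [mem_filter, mem_univ, true_and]
    rintro ⟨x, hx⟩
    simpa [Subtype.ext_iff, ← hf] using hx

theorem sum_sign_of_card_support_eq (t : ℕ) :
    ∑ σ ∈ univ.filter (fun σ : Perm α => #σ.support = t), (sign σ : ℤ) =
      (Fintype.card α).choose t * ((-1) ^ t * (1 - t)) := by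
  have hmaps : ∀ σ ∈ univ.filter (fun σ : Perm α => #σ.support = t),
      σ.support ∈ powersetCard t univ := by
    simp
  rw [← sum_fiberwise_of_maps_to hmaps]
  calc _ = ∑ s ∈ powersetCard t (univ : Finset α), ((-1) ^ t * (1 - t) : ℤ) := by
        refine sum_congr rfl fun s hs => ?_
        rw [mem_powersetCard] at hs
        rw [filter_filter, ← hs.2, ← sum_sign_of_support_eq]
        refine sum_congr (filter_congr fun σ _ => ?_) fun _ _ => rfl
        exact and_iff_right_of_imp (congrArg card)
    _ = _ := by simp

end Equiv.Perm

open Equiv.Perm in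
theorem stmt9_general (n t : ℕ) (ht2 : 2 ≤ t) :
    ∑ σ ∈ univ.filter (fun σ : Equiv.Perm (Fin n) => σ.support.card = t),
        (Equiv.Perm.sign σ : ℤ) =
      (-1) ^ (t - 1) * ((t : ℤ) - 1) * n.choose t := by
  rw [sum_sign_of_card_support_eq, Fintype.card_fin]
  obtain ⟨m, rfl⟩ : ∃ m, t = m + 1 := ⟨t - 1, by omega⟩
  rw [Nat.add_sub_cancel]
  push_cast
  ring

/-- For `2 ≤ t ≤ n`, the sum of the signs of all permutations of support size `t` equals
`(-1)^(t-1) · (t-1) · C(n,t)`. -/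
theorem stmt9 (n t : ℕ) (hn : 2 ≤ n) (ht2 : 2 ≤ t) (htn : t ≤ n) :
    ∑ σ ∈ univ.filter (fun σ : Equiv.Perm (Fin n) => σ.support.card = t),
        (Equiv.Perm.sign σ : ℤ) =
      (-1) ^ (t - 1) * ((t : ℤ) - 1) * n.choose t :=
  stmt9_general n t ht2
end

section
/- For every integer n ≥ 7 and every integer t with 2 ≤ t ≤ n−2, let Δ(t) = (n−t−1)·C(n,t)·D(t) − (n−1)·(−1)^{t−1}·(t−1)·C(n,t). Then Δ(3) = −n(n−1)(n−2), and Δ(t) ≥ n(n−1)(n−2) for every such t with t ≠ 3, where C(n,t) is the binomial coefficient. -/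
open Finset

/-!
Write `Δ(t) = C(n,t) · δ(t)` with `δ(t) = (n-t-1) D(t) - (n-1) (-1)^(t-1) (t-1)`.
For `t = 3` one has `δ(3) = -6` and `6 C(n,3) = n(n-1)(n-2)`.
Otherwise `δ(t) ≥ 2(n-2)`: for even `t` the second term contributes `+(n-1)(t-1)`, and for
odd `t ≥ 5` the first term wins because `D(t) > t(t+2)`.
Since `C(n,t) ≥ C(n,2)` for `2 ≤ t ≤ n-2` and `2(n-2) C(n,2) = n(n-1)(n-2)`, the bound follows.
-/

namespace Nat

theorem cast_choose_two_mul {S : Type*} [Ring S] (a : ℕ) :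
    (a.choose 2 : S) * 2 = a * (a - 1) := by
  rw [← cast_descFactorial_two, descFactorial_eq_factorial_mul_choose, factorial_two, mul_comm,
    cast_mul, cast_two]

theorem cast_choose_three_mul {S : Type*} [CommRing S] (a : ℕ) :
    (a.choose 3 : S) * 6 = a * (a - 1) * (a - 2) := by
  have h : (a.descFactorial 3 : S) = a * (a - 1) * (a - 2) := by
    rcases a with _ | _ | a
    · simp
    · simp
    · simp [descFactorial_succ, show a + 1 + 1 - 2 = a by omega]
      ring
  rw [← h, descFactorial_eq_factorial_mul_choose, mul_comm, cast_mul]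
  norm_num [factorial]

theorem choose_le_choose_of_le_of_le_sub {n r s : ℕ} (hrs : r ≤ s) (hsn : s ≤ n - r) :
    n.choose r ≤ n.choose s := by
  have mono : ∀ {r s}, r ≤ s → s ≤ n / 2 → n.choose r ≤ n.choose s := by
    intro r s hrs hs
    induction s, hrs using Nat.le_induction with
    | base => rfl
    | succ k _ ih => exact (ih (by omega)).trans (choose_le_succ_of_lt_half_left (by omega))
  rcases le_or_gt s (n / 2) with hs | hs
  · exact mono hrs hs
  · rw [← choose_symm (show s ≤ n by omega)]
    exact mono (by omega) (by omega)

end Nat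

theorem mul_numDerangements_le_numDerangements_succ (s : ℕ) :
    s * numDerangements s ≤ numDerangements (s + 1) := by
  rcases s with _ | s
  · simp
  · rw [numDerangements_add_two]
    exact Nat.mul_le_mul_left _ (Nat.le_add_left _ _)

theorem mul_add_two_lt_numDerangements {t : ℕ} (ht : 5 ≤ t) :
    t * (t + 2) < numDerangements t := by
  induction t, ht using Nat.le_induction with
  | base => decide
  | succ k hk ih =>
    have := mul_numDerangements_le_numDerangements_succ k
    nlinarith

theorem two_mul_sub_two_le_derangement_bracket {n t : ℕ} (ht2 : 2 ≤ t) (ht3 : t ≠ 3)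
    (htn : t + 2 ≤ n) :
    2 * ((n : ℤ) - 2) ≤
      ((n : ℤ) - t - 1) * numDerangements t - ((n : ℤ) - 1) * (-1) ^ (t - 1) * ((t : ℤ) - 1) := by
  have hnt : (t : ℤ) + 2 ≤ n := by exact_mod_cast htn
  rcases Nat.even_or_odd t with ht_even | ht_odd
  · rw [(Nat.Even.sub_odd (by omega) ht_even odd_one).neg_one_pow]
    obtain rfl | ht4 : t = 2 ∨ 4 ≤ t := by obtain ⟨k, rfl⟩ := ht_even; omega
    · rw [show numDerangements 2 = 1 by decide]
      push_cast
      linarith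
    · have ht : (4 : ℤ) ≤ t := by exact_mod_cast ht4
      have hD : (0 : ℤ) ≤ ((n : ℤ) - t - 1) * numDerangements t :=
        mul_nonneg (by linarith) (Int.natCast_nonneg _)
      nlinarith
  · rw [(Nat.Odd.sub_odd ht_odd odd_one).neg_one_pow]
    have ht5 : 5 ≤ t := by obtain ⟨k, rfl⟩ := ht_odd; omega
    have hD : (t : ℤ) * (t + 2) + 1 ≤ numDerangements t := by
      exact_mod_cast mul_add_two_lt_numDerangements ht5
    have ht : (5 : ℤ) ≤ t := by exact_mod_cast ht5
    -- with `m = n - t - 2`, the difference of the sides is `m (D - t - 1) + (D - t² - 2t + 1)`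
    nlinarith [mul_nonneg (by linarith : (0 : ℤ) ≤ n - t - 2)
      (by nlinarith : (0 : ℤ) ≤ numDerangements t - t - 1)]

theorem stmt10_general (n : ℕ) (t : ℕ) (ht2 : 2 ≤ t) (htn : t ≤ n - 2) :
    (t = 3 →
      ((n : ℤ) - t - 1) * (n.choose t) * (numDerangements t) -
          ((n : ℤ) - 1) * (-1) ^ (t - 1) * ((t : ℤ) - 1) * (n.choose t) =
        -((n : ℤ) * ((n : ℤ) - 1) * ((n : ℤ) - 2))) ∧
    (t ≠ 3 →
      (n : ℤ) * ((n : ℤ) - 1) * ((n : ℤ) - 2) ≤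
        ((n : ℤ) - t - 1) * (n.choose t) * (numDerangements t) -
          ((n : ℤ) - 1) * (-1) ^ (t - 1) * ((t : ℤ) - 1) * (n.choose t)) := by
  refine ⟨?_, fun ht3 => ?_⟩
  · rintro rfl
    rw [show numDerangements 3 = 2 by decide]
    linear_combination (-1 : ℤ) * Nat.cast_choose_three_mul (S := ℤ) n
  · have hbracket := two_mul_sub_two_le_derangement_bracket (n := n) ht2 ht3 (by omega)
    have hchoose : (n.choose 2 : ℤ) ≤ n.choose t := by
      exact_mod_cast Nat.choose_le_choose_of_le_of_le_sub ht2 htn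
    have hn : (4 : ℤ) ≤ n := by omega
    calc (n : ℤ) * (n - 1) * (n - 2) = n.choose 2 * (2 * ((n : ℤ) - 2)) := by
          linear_combination ((n : ℤ) - 2) * (Nat.cast_choose_two_mul (S := ℤ) n).symm
      _ ≤ n.choose t * (((n : ℤ) - t - 1) * numDerangements t -
            ((n : ℤ) - 1) * (-1) ^ (t - 1) * ((t : ℤ) - 1)) :=
          mul_le_mul hchoose hbracket (by linarith) (Int.natCast_nonneg _)
      _ = _ := by ring

/-- For `n ≥ 7` and `2 ≤ t ≤ n-2`, with
`Δ(t) = (n-t-1)·C(n,t)·D(t) - (n-1)·(-1)^(t-1)·(t-1)·C(n,t)`, one has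
`Δ(3) = -n(n-1)(n-2)` and `Δ(t) ≥ n(n-1)(n-2)` for `t ≠ 3`. -/
theorem stmt10 (n : ℕ) (hn : 7 ≤ n) (t : ℕ) (ht2 : 2 ≤ t) (htn : t ≤ n - 2) :
    (t = 3 →
      ((n : ℤ) - t - 1) * (n.choose t) * (numDerangements t) -
          ((n : ℤ) - 1) * (-1) ^ (t - 1) * ((t : ℤ) - 1) * (n.choose t) =
        -((n : ℤ) * ((n : ℤ) - 1) * ((n : ℤ) - 2))) ∧
    (t ≠ 3 →
      (n : ℤ) * ((n : ℤ) - 1) * ((n : ℤ) - 2) ≤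
        ((n : ℤ) - t - 1) * (n.choose t) * (numDerangements t) -
          ((n : ℤ) - 1) * (-1) ^ (t - 1) * ((t : ℤ) - 1) * (n.choose t)) :=
  stmt10_general n t ht2 htn
end

section
/- For every n ≥ 6 and every conjugacy class S of S_n consisting of derangements (i.e., fix(σ) = 0 for all σ ∈ S), the Cayley graph Cay(S_n,S) has an eigenvalue λ with 0 < λ < |S|. -/
open Finset

/-!
The adjacency operator of `Cay(S_n, S)` sends `u` to `g ↦ ∑_{s ∈ S} u (g s)`. Test it on
`u g = w (g a) (g b)` for a function `w` of ordered pairs with zero diagonal and zero row and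
column sums. Then `A u g = ∑_{i,j} K(i,j) w (g i) (g j)`, where `K(i,j)` counts the `s ∈ S` with
`s a = i`, `s b = j`. For a conjugation-invariant set of derangements `K` is constant on the orbits
of the stabiliser of `a` and `b`, so `A u` is again a combination of `u` and of
`g ↦ w (g b) (g a)`. Symmetric and antisymmetric `w` therefore give eigenfunctions; they span the
modules `S^(n-2,2)` and `S^(n-2,1,1)`. Double counting computes the orbit constants: if `m` is the
number of points on 2-cycles of an element of `S`, the two eigenvalues are `|S| m / (n (n - 3))`
and `|S| (2 - m) / ((n - 1) (n - 2))`. For `m = 0` the second lies strictly between `0` and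
`|S|`, and otherwise the first does, as soon as `n ≥ 5`.
-/

open Equiv

section ConjInvariant

variable {α : Type*} {S : Finset (Perm α)}

def IsConjInvariant (S : Finset (Perm α)) : Prop :=
  ∀ s ∈ S, ∀ g : Perm α, g * s * g⁻¹ ∈ S

lemma IsConjInvariant.card_filter_conj (hS : IsConjInvariant S) (g : Perm α)
    (P : Perm α → Prop) [DecidablePred P] :
    #{s ∈ S | P (g * s * g⁻¹)} = #{s ∈ S | P s} := by
  apply card_nbij' (fun s => g * s * g⁻¹) (fun s => g⁻¹ * s * g)
  · intro s hs
    simp only [coe_filter] at hs ⊢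
    exact ⟨hS s hs.1 g, hs.2⟩
  · intro s hs
    simp only [coe_filter] at hs ⊢
    refine ⟨by simpa using hS s hs.1 g⁻¹, by simpa [mul_assoc] using hs.2⟩
  · intro s _; group
  · intro s _; group

def pairCount [DecidableEq α] (S : Finset (Perm α)) (a b c d : α) : ℕ :=
  #{s ∈ S | s a = c ∧ s b = d}

lemma IsConjInvariant.pairCount_perm [DecidableEq α] (hS : IsConjInvariant S) (g : Perm α)
    (a b c d : α) :
    pairCount S (g a) (g b) (g c) (g d) = pairCount S a b c d := by
  unfold pairCount
  convert hS.card_filter_conj g⁻¹ (fun s => s a = c ∧ s b = d) using 3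
  simp [Equiv.symm_apply_eq]

lemma exists_perm_apply_eq_of_ne {a b c d : α} (hab : a ≠ b) (hcd : c ≠ d) :
    ∃ g : Perm α, g a = c ∧ g b = d := by
  obtain ⟨g, hg⟩ := Perm.exists_extending_pair ![a, b] ![c, d] (injective_pair_iff_ne.mpr hab)
    (injective_pair_iff_ne.mpr hcd)
  exact ⟨g, hg 0, hg 1⟩

lemma injective_vecCons_four {a b c d : α} (hab : a ≠ b) (hcd : c ≠ d) (hc : c ≠ a ∧ c ≠ b)
    (hd : d ≠ a ∧ d ≠ b) : Function.Injective ![a, b, c, d] := by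
  intro i j h
  fin_cases i <;> fin_cases j <;> simp_all [eq_comm]

lemma exists_perm_fixing_apply_eq {a b c d c' d' : α} (hab : a ≠ b) (hcd : c ≠ d)
    (hc'd' : c' ≠ d') (hc : c ≠ a ∧ c ≠ b) (hd : d ≠ a ∧ d ≠ b) (hc' : c' ≠ a ∧ c' ≠ b)
    (hd' : d' ≠ a ∧ d' ≠ b) :
    ∃ g : Perm α, g a = a ∧ g b = b ∧ g c = c' ∧ g d = d' := by
  obtain ⟨g, hg⟩ := Perm.exists_extending_pair ![a, b, c, d] ![a, b, c', d']
    (injective_vecCons_four hab hcd hc hd) (injective_vecCons_four hab hc'd' hc' hd')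
  exact ⟨g, hg 0, hg 1, hg 2, hg 3⟩

end ConjInvariant

section DoubleCounting

variable {α : Type*} [Fintype α] {S : Finset (Perm α)}

lemma IsConjInvariant.card_filter_mul_card_offDiag (hS : IsConjInvariant S)
    (C : α → α → Perm α → Prop) [∀ a b s, Decidable (C a b s)]
    (hC : ∀ (g : Perm α) a b s, C (g a) (g b) (g * s * g⁻¹) ↔ C a b s) {a b : α} (hab : a ≠ b) :
    #{s ∈ S | C a b s} * #(univ.offDiag : Finset (α × α))
      = ∑ s ∈ S, #{x ∈ (univ.offDiag : Finset (α × α)) | C x.1 x.2 s} := by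
  have hconst : ∀ x ∈ (univ.offDiag : Finset (α × α)),
      #{s ∈ S | C x.1 x.2 s} = #{s ∈ S | C a b s} := by
    rintro ⟨c, d⟩ hcd
    obtain ⟨g, rfl, rfl⟩ := exists_perm_apply_eq_of_ne hab (mem_offDiag.mp hcd).2.2
    rw [← hS.card_filter_conj g]
    simp only [hC]
  rw [mul_comm, ← smul_eq_mul, ← sum_const, ← sum_congr rfl hconst]
  simp only [card_filter]
  exact sum_comm

lemma card_offDiag_filter_apply_eq [DecidableEq α] {s : Perm α} (hs : ∀ a, s a ≠ a) :
    #{x ∈ (univ.offDiag : Finset (α × α)) | s x.1 = x.2} = Fintype.card α := by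
  rw [← card_univ]
  refine card_bij' (fun x _ => x.1) (fun a _ => (a, s a)) (by simp)
    (fun a _ => by simp [(hs a).symm]) (fun x hx => ?_) (fun _ _ => rfl)
  simp_all

lemma card_offDiag_filter_apply_eq_and [DecidableEq α] {s : Perm α} (hs : ∀ a, s a ≠ a) :
    #{x ∈ (univ.offDiag : Finset (α × α)) | s x.1 = x.2 ∧ s x.2 = x.1}
      = #{a | s (s a) = a} := by
  refine card_bij' (fun x _ => x.1) (fun a _ => (a, s a)) (fun x hx => ?_)
    (fun a _ => by simp_all [(hs a).symm]) (fun x hx => ?_) (fun _ _ => rfl) <;>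
  simp_all

lemma card_filter_apply_apply_conj [DecidableEq α] (c s : Perm α) :
    #{x | (c * s * c⁻¹) ((c * s * c⁻¹) x) = x} = #{x | s (s x) = x} := by
  refine card_nbij' (⇑c⁻¹) c (fun x hx => ?_) (fun x hx => ?_) (fun x _ => by simp)
    (fun x _ => by simp)
  · simp only [coe_filter, mem_univ, true_and, Set.mem_ofPred_eq] at hx ⊢
    simpa [Equiv.symm_apply_eq] using congrArg c.symm hx
  · simp only [coe_filter, mem_univ, true_and, Set.mem_ofPred_eq] at hx ⊢
    simp [hx]

end DoubleCounting

section PairCount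

variable {α : Type*} [DecidableEq α] {S : Finset (Perm α)}

lemma sum_apply_apply_eq_sum_pairCount [Fintype α] (S : Finset (Perm α)) (a b : α) (F : α → α → ℝ) :
    ∑ s ∈ S, F (s a) (s b) = ∑ i, ∑ j, (pairCount S a b i j : ℝ) * F i j := by
  rw [← Fintype.sum_prod_type', ← sum_fiberwise' S (fun s => (s a, s b)) (fun x => F x.1 x.2)]
  refine sum_congr rfl fun x _ => ?_
  rw [sum_const, nsmul_eq_mul, pairCount]
  simp only [Prod.ext_iff]

lemma pairCount_eq_zero_of_left (hder : ∀ s ∈ S, ∀ x, s x ≠ x) (a b d : α) :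
    pairCount S a b a d = 0 := by
  rw [pairCount, card_eq_zero, filter_eq_empty_iff]
  exact fun s hs h => hder s hs a h.1

lemma pairCount_eq_zero_of_right (hder : ∀ s ∈ S, ∀ x, s x ≠ x) (a b c : α) :
    pairCount S a b c b = 0 := by
  rw [pairCount, card_eq_zero, filter_eq_empty_iff]
  exact fun s hs h => hder s hs b h.2

lemma pairCount_self_eq_zero {a b : α} (hab : a ≠ b) (c : α) : pairCount S a b c c = 0 := by
  rw [pairCount, card_eq_zero, filter_eq_empty_iff]
  exact fun s _ h => hab (s.injective (h.1.trans h.2.symm))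

lemma IsConjInvariant.pairCount_apply_apply (hS : IsConjInvariant S)
    {a b : α} (g : Perm α) (ha : g a = a) (hb : g b = b) (c d : α) :
    pairCount S a b (g c) (g d) = pairCount S a b c d := by
  conv_lhs => rw [← ha, ← hb]
  exact hS.pairCount_perm g a b c d

lemma IsConjInvariant.pairCount_right_eq (hS : IsConjInvariant S) {a b c c' : α}
    (hc : c ≠ a ∧ c ≠ b) (hc' : c' ≠ a ∧ c' ≠ b) :
    pairCount S a b b c' = pairCount S a b b c := by
  have hb := swap_apply_of_ne_of_ne hc.2.symm hc'.2.symm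
  rw [← hS.pairCount_apply_apply (swap c c') (swap_apply_of_ne_of_ne hc.1.symm hc'.1.symm) hb,
    hb, swap_apply_right]

lemma IsConjInvariant.pairCount_left_eq (hS : IsConjInvariant S) {a b c c' : α}
    (hc : c ≠ a ∧ c ≠ b) (hc' : c' ≠ a ∧ c' ≠ b) :
    pairCount S a b c' a = pairCount S a b c a := by
  have ha := swap_apply_of_ne_of_ne hc.1.symm hc'.1.symm
  rw [← hS.pairCount_apply_apply (swap c c') ha (swap_apply_of_ne_of_ne hc.2.symm hc'.2.symm),
    ha, swap_apply_right]

lemma IsConjInvariant.pairCount_eq_of_ne (hS : IsConjInvariant S) {a b c d c' d' : α}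
    (hab : a ≠ b) (hcd : c ≠ d) (hc'd' : c' ≠ d') (hc : c ≠ a ∧ c ≠ b) (hd : d ≠ a ∧ d ≠ b)
    (hc' : c' ≠ a ∧ c' ≠ b) (hd' : d' ≠ a ∧ d' ≠ b) :
    pairCount S a b c' d' = pairCount S a b c d := by
  obtain ⟨g, ha, hb, rfl, rfl⟩ := exists_perm_fixing_apply_eq hab hcd hc'd' hc hd hc' hd'
  exact hS.pairCount_apply_apply g ha hb c d

end PairCount

section OrbitDecomposition

variable {α : Type*} [Fintype α] [DecidableEq α] {S : Finset (Perm α)}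

lemma sum_univ_eq_add_add_sum_erase_erase {M : Type*} [AddCommMonoid M] {a b : α} (hab : a ≠ b)
    (f : α → M) : ∑ x, f x = f a + f b + ∑ x ∈ (univ.erase a).erase b, f x := by
  rw [← add_sum_erase _ f (mem_univ a), ← add_sum_erase _ f (mem_erase.mpr ⟨hab.symm, mem_univ b⟩),
    add_assoc]

-- Apart from the pairs where `pairCount S a b` vanishes, the orbits of the stabiliser of `a`
-- and `b` are `(b, a)`, `{b} × J`, `J × {a}` and the off-diagonal of `J × J`, where `J` omits
-- `a` and `b`; `c` and `d` are the representatives.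
lemma IsConjInvariant.sum_pairCount_mul (hS : IsConjInvariant S)
    (hder : ∀ s ∈ S, ∀ x, s x ≠ x) {a b c d : α} (hab : a ≠ b) (hcd : c ≠ d)
    (hc : c ≠ a ∧ c ≠ b) (hd : d ≠ a ∧ d ≠ b) (F : α → α → ℝ) :
    ∑ i, ∑ j, (pairCount S a b i j : ℝ) * F i j
      = pairCount S a b b a * F b a
        + pairCount S a b b c * ∑ j ∈ (univ.erase a).erase b, F b j
        + pairCount S a b c a * ∑ i ∈ (univ.erase a).erase b, F i a
        + pairCount S a b c d *
            ∑ i ∈ (univ.erase a).erase b, (∑ j ∈ (univ.erase a).erase b, F i j - F i i) := by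
  set J := (univ.erase a).erase b
  have memJ : ∀ {x}, x ∈ J ↔ x ≠ a ∧ x ≠ b := by simp [J, and_comm]
  have row_a : ∑ j, (pairCount S a b a j : ℝ) * F a j = 0 :=
    sum_eq_zero fun j _ => by rw [pairCount_eq_zero_of_left hder, Nat.cast_zero, zero_mul]
  have row_b : ∑ j, (pairCount S a b b j : ℝ) * F b j
      = pairCount S a b b a * F b a + pairCount S a b b c * ∑ j ∈ J, F b j := by
    rw [sum_univ_eq_add_add_sum_erase_erase hab, pairCount_self_eq_zero hab, mul_sum,
      sum_congr rfl fun j hj => by rw [hS.pairCount_right_eq hc (memJ.mp hj)]]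
    simp [J]
  have row_J : ∀ i ∈ J, ∑ j, (pairCount S a b i j : ℝ) * F i j
      = pairCount S a b c a * F i a + pairCount S a b c d * (∑ j ∈ J, F i j - F i i) := by
    intro i hi
    rw [sum_univ_eq_add_add_sum_erase_erase hab, pairCount_eq_zero_of_right hder,
      hS.pairCount_left_eq hc (memJ.mp hi), ← add_sum_erase J _ hi, pairCount_self_eq_zero hab,
      ← sum_erase_eq_sub hi, mul_sum, sum_congr rfl fun j hj => by
        rw [hS.pairCount_eq_of_ne hab hcd (ne_of_mem_erase hj).symm hc hd (memJ.mp hi)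
          (memJ.mp (mem_of_mem_erase hj))]]
    simp
  rw [sum_univ_eq_add_add_sum_erase_erase hab, row_a, row_b, sum_congr rfl row_J,
    sum_add_distrib, ← mul_sum, ← mul_sum]
  ring

lemma IsConjInvariant.sum_apply_apply_eq_of_margins_eq_zero (hS : IsConjInvariant S)
    (hder : ∀ s ∈ S, ∀ x, s x ≠ x) {a b c d : α} (hab : a ≠ b) (hcd : c ≠ d)
    (hc : c ≠ a ∧ c ≠ b) (hd : d ≠ a ∧ d ≠ b) (F : α → α → ℝ) (hdiag : ∀ i, F i i = 0)
    (hrow : ∀ i, ∑ j, F i j = 0) (hcol : ∀ j, ∑ i, F i j = 0) :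
    ∑ s ∈ S, F (s a) (s b)
      = (pairCount S a b b a - pairCount S a b b c - pairCount S a b c a) * F b a
        + pairCount S a b c d * (F a b + F b a) := by
  have hJ : ∀ f : α → ℝ, ∑ x ∈ (univ.erase a).erase b, f x = ∑ x, f x - f a - f b := fun f => by
    rw [sum_univ_eq_add_add_sum_erase_erase hab f]; ring
  have hinner : ∀ i, ∑ j ∈ (univ.erase a).erase b, F i j - F i i = - F i a - F i b := fun i => by
    rw [hJ, hrow, hdiag]; ring
  rw [sum_apply_apply_eq_sum_pairCount, hS.sum_pairCount_mul hder hab hcd hc hd,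
    sum_congr rfl fun i _ => hinner i, hJ, hJ, hJ, sum_sub_distrib, sum_neg_distrib, hrow, hcol,
    hcol, hdiag, hdiag]
  ring

lemma IsConjInvariant.sum_apply_mul_apply_eq (hS : IsConjInvariant S)
    (hder : ∀ s ∈ S, ∀ x, s x ≠ x) {a b c d : α} (hab : a ≠ b) (hcd : c ≠ d)
    (hc : c ≠ a ∧ c ≠ b) (hd : d ≠ a ∧ d ≠ b) (w : α → α → ℝ) (hdiag : ∀ i, w i i = 0)
    (hrow : ∀ i, ∑ j, w i j = 0) (hcol : ∀ j, ∑ i, w i j = 0) (g : Perm α) :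
    ∑ s ∈ S, w ((g * s) a) ((g * s) b)
      = (pairCount S a b b a - pairCount S a b b c - pairCount S a b c a) * w (g b) (g a)
        + pairCount S a b c d * (w (g a) (g b) + w (g b) (g a)) :=
  hS.sum_apply_apply_eq_of_margins_eq_zero hder hab hcd hc hd (fun i j => w (g i) (g j))
    (fun i => hdiag (g i)) (fun i => (Equiv.sum_comp g (w (g i))).trans (hrow _))
    (fun j => (Equiv.sum_comp g (w · (g j))).trans (hcol _))

lemma card_erase_erase_univ {a b : α} (hab : a ≠ b) :
    (#((univ.erase a).erase b) : ℝ) = Fintype.card α - 2 := by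
  have := sum_univ_eq_add_add_sum_erase_erase hab (fun _ => (1 : ℝ))
  simp only [sum_const, card_univ, nsmul_eq_mul, mul_one] at this
  linarith

lemma IsConjInvariant.card_eq_pairCount (hS : IsConjInvariant S)
    (hder : ∀ s ∈ S, ∀ x, s x ≠ x) {a b c d : α} (hab : a ≠ b) (hcd : c ≠ d)
    (hc : c ≠ a ∧ c ≠ b) (hd : d ≠ a ∧ d ≠ b) :
    (#S : ℝ) = pairCount S a b b a
      + (pairCount S a b b c + pairCount S a b c a) * (Fintype.card α - 2)
      + pairCount S a b c d * ((Fintype.card α - 2) * (Fintype.card α - 3)) := by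
  have := sum_apply_apply_eq_sum_pairCount S a b (fun _ _ => 1)
  rw [hS.sum_pairCount_mul hder hab hcd hc hd] at this
  simp only [sum_const, nsmul_eq_mul, mul_one, card_erase_erase_univ hab] at this
  linear_combination this

lemma IsConjInvariant.card_filter_apply_left_eq_pairCount (hS : IsConjInvariant S)
    (hder : ∀ s ∈ S, ∀ x, s x ≠ x) {a b c d : α} (hab : a ≠ b) (hcd : c ≠ d)
    (hc : c ≠ a ∧ c ≠ b) (hd : d ≠ a ∧ d ≠ b) :
    (#{s ∈ S | s a = b} : ℝ)
      = pairCount S a b b a + pairCount S a b b c * (Fintype.card α - 2) := by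
  have := sum_apply_apply_eq_sum_pairCount S a b (fun i _ => if i = b then 1 else 0)
  rw [hS.sum_pairCount_mul hder hab hcd hc hd] at this
  simpa [card_erase_erase_univ hab] using this

lemma IsConjInvariant.card_filter_apply_right_eq_pairCount (hS : IsConjInvariant S)
    (hder : ∀ s ∈ S, ∀ x, s x ≠ x) {a b c d : α} (hab : a ≠ b) (hcd : c ≠ d)
    (hc : c ≠ a ∧ c ≠ b) (hd : d ≠ a ∧ d ≠ b) :
    (#{s ∈ S | s b = a} : ℝ)
      = pairCount S a b b a + pairCount S a b c a * (Fintype.card α - 2) := by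
  have := sum_apply_apply_eq_sum_pairCount S a b (fun _ j => if j = a then 1 else 0)
  rw [hS.sum_pairCount_mul hder hab hcd hc hd] at this
  simpa [card_erase_erase_univ hab] using this

end OrbitDecomposition

section EigenvalueFormulas

variable {α : Type*} [Fintype α] [DecidableEq α] {S : Finset (Perm α)}

lemma IsConjInvariant.card_filter_apply_eq_mul (hS : IsConjInvariant S)
    (hder : ∀ s ∈ S, ∀ x, s x ≠ x) {a b : α} (hab : a ≠ b) :
    #{s ∈ S | s a = b} * (Fintype.card α * Fintype.card α - Fintype.card α)
      = #S * Fintype.card α := by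
  rw [← card_univ, ← offDiag_card, hS.card_filter_mul_card_offDiag (fun a b s => s a = b)
    (fun g a b s => by simp) hab, card_univ,
    sum_congr rfl fun s hs => card_offDiag_filter_apply_eq (hder s hs), sum_const, smul_eq_mul]

lemma IsConjInvariant.pairCount_swap_mul (hS : IsConjInvariant S)
    (hder : ∀ s ∈ S, ∀ x, s x ≠ x) {a b : α} (hab : a ≠ b) :
    pairCount S a b b a * (Fintype.card α * Fintype.card α - Fintype.card α)
      = ∑ s ∈ S, #{x | s (s x) = x} := by
  rw [← card_univ, ← offDiag_card, pairCount,
    hS.card_filter_mul_card_offDiag (fun a b s => s a = b ∧ s b = a) (fun g a b s => by simp) hab]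
  exact sum_congr rfl fun s hs => card_offDiag_filter_apply_eq_and (hder s hs)

lemma IsConjInvariant.antisymm_eigenvalue_mul (hS : IsConjInvariant S)
    (hder : ∀ s ∈ S, ∀ x, s x ≠ x) {a b c d : α} (hab : a ≠ b) (hcd : c ≠ d)
    (hc : c ≠ a ∧ c ≠ b) (hd : d ≠ a ∧ d ≠ b) :
    ((pairCount S a b b c + pairCount S a b c a - pairCount S a b b a : ℝ))
        * ((Fintype.card α - 1) * (Fintype.card α - 2))
      = 2 * #S - ∑ s ∈ S, (#{x | s (s x) = x} : ℝ) := by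
  have hB := congrArg (Nat.cast (R := ℝ)) (hS.card_filter_apply_eq_mul hder hab)
  have hB' := congrArg (Nat.cast (R := ℝ)) (hS.card_filter_apply_eq_mul hder hab.symm)
  have hp := congrArg (Nat.cast (R := ℝ)) (hS.pairCount_swap_mul hder hab)
  push_cast [Nat.cast_sub (Nat.le_mul_self _)] at hB hB' hp
  have hq := hS.card_filter_apply_left_eq_pairCount hder hab hcd hc hd
  have hr := hS.card_filter_apply_right_eq_pairCount hder hab hcd hc hd
  have hn : (Fintype.card α : ℝ) ≠ 0 := Nat.cast_ne_zero.mpr (Fintype.card_pos_iff.mpr ⟨a⟩).ne'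
  apply mul_left_cancel₀ hn
  linear_combination (-(Fintype.card α * (Fintype.card α - 1) : ℝ)) * (hq + hr) + hB + hB'
    - (Fintype.card α : ℝ) * hp

lemma IsConjInvariant.symm_eigenvalue_mul (hS : IsConjInvariant S)
    (hder : ∀ s ∈ S, ∀ x, s x ≠ x) {a b c d : α} (hab : a ≠ b) (hcd : c ≠ d)
    (hc : c ≠ a ∧ c ≠ b) (hd : d ≠ a ∧ d ≠ b) :
    ((pairCount S a b b a - pairCount S a b b c - pairCount S a b c a
        + 2 * pairCount S a b c d : ℝ)) * (Fintype.card α * (Fintype.card α - 3))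
      = ∑ s ∈ S, (#{x | s (s x) = x} : ℝ) := by
  have hB := congrArg (Nat.cast (R := ℝ)) (hS.card_filter_apply_eq_mul hder hab)
  have hB' := congrArg (Nat.cast (R := ℝ)) (hS.card_filter_apply_eq_mul hder hab.symm)
  have hp := congrArg (Nat.cast (R := ℝ)) (hS.pairCount_swap_mul hder hab)
  push_cast [Nat.cast_sub (Nat.le_mul_self _)] at hB hB' hp
  have hN := hS.card_eq_pairCount hder hab hcd hc hd
  have hq := hS.card_filter_apply_left_eq_pairCount hder hab hcd hc hd
  have hr := hS.card_filter_apply_right_eq_pairCount hder hab hcd hc hd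
  have h4 : (4 : ℝ) ≤ Fintype.card α := by
    exact_mod_cast (Fintype.card_fin 4).symm.trans_le
      (Fintype.card_le_of_injective _ (injective_vecCons_four hab hcd hc hd))
  have hn : (Fintype.card α - 1) * (Fintype.card α - 2 : ℝ) ≠ 0 := by
    exact (mul_pos (by linarith) (by linarith)).ne'
  apply mul_left_cancel₀ hn
  set n : ℝ := (Fintype.card α : ℝ)
  linear_combination ((n - 1) * (n - 2)) * hp + (n * (n - 1) * (n - 1)) * (hq + hr)
    - 2 * n * (n - 1) * hN - (n - 1) * (hB + hB')

end EigenvalueFormulas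

section CayleyGraph

variable {n : ℕ} {S : Finset (Perm (Fin n))}

lemma adjMat_mulVec_apply (S : Finset (Perm (Fin n))) (u : Perm (Fin n) → ℝ) (g : Perm (Fin n)) :
    (adjMat n S).mulVec u g = ∑ s ∈ S, u (g * s) := by
  simp only [Matrix.mulVec, dotProduct, adjMat, Matrix.of_apply, ite_mul, one_mul, zero_mul]
  rw [← Equiv.sum_comp (Equiv.mulLeft g), ← sum_filter]
  simp only [coe_mulLeft, inv_mul_cancel_left]
  rw [filter_mem_eq_inter, univ_inter]

lemma isEig_of_sum_mul_eq {u : Perm (Fin n) → ℝ} {μ : ℝ} (hu : u ≠ 0)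
    (h : ∀ g, ∑ s ∈ S, u (g * s) = μ * u g) : IsEig n S μ :=
  ⟨u, hu, funext fun g => by rw [adjMat_mulVec_apply, h, Pi.smul_apply, smul_eq_mul]⟩

lemma IsConjInvariant.isEig_of_antisymm (hS : IsConjInvariant S)
    (hder : ∀ s ∈ S, ∀ x, s x ≠ x) {a b c d : Fin n} (hab : a ≠ b) (hcd : c ≠ d)
    (hc : c ≠ a ∧ c ≠ b) (hd : d ≠ a ∧ d ≠ b) (x y : Fin n → ℝ) (hx : ∑ i, x i = 0)
    (hy : ∑ i, y i = 0) (hw : x a * y b ≠ y a * x b) :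
    IsEig n S (pairCount S a b b c + pairCount S a b c a - pairCount S a b b a) := by
  set w : Fin n → Fin n → ℝ := fun i j => x i * y j - y i * x j
  have hrow : ∀ i, ∑ j, w i j = 0 := fun i => by
    simp only [w, sum_sub_distrib, ← mul_sum, hx, hy, mul_zero, sub_zero]
  have hcol : ∀ j, ∑ i, w i j = 0 := fun j => by
    simp only [w, sum_sub_distrib, ← sum_mul, hx, hy, zero_mul, sub_zero]
  refine isEig_of_sum_mul_eq (u := fun g => w (g a) (g b)) (fun h => hw ?_) fun g => ?_
  · simpa [w, sub_eq_zero] using congrFun h 1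
  · rw [hS.sum_apply_mul_apply_eq hder hab hcd hc hd w (fun i => by simp [w, mul_comm]) hrow hcol]
    ring

lemma IsConjInvariant.isEig_of_symm (hS : IsConjInvariant S)
    (hder : ∀ s ∈ S, ∀ x, s x ≠ x) {a b c d : Fin n} (hab : a ≠ b) (hcd : c ≠ d)
    (hc : c ≠ a ∧ c ≠ b) (hd : d ≠ a ∧ d ≠ b) (x y : Fin n → ℝ) (hx : ∑ i, x i = 0)
    (hy : ∑ i, y i = 0) (hxy : ∀ i, x i * y i = 0) (hw : x a * y b + y a * x b ≠ 0) :
    IsEig n S (pairCount S a b b a - pairCount S a b b c - pairCount S a b c a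
      + 2 * pairCount S a b c d) := by
  set w : Fin n → Fin n → ℝ := fun i j => x i * y j + y i * x j
  have hrow : ∀ i, ∑ j, w i j = 0 := fun i => by
    simp only [w, sum_add_distrib, ← mul_sum, hx, hy, mul_zero, add_zero]
  have hcol : ∀ j, ∑ i, w i j = 0 := fun j => by
    simp only [w, sum_add_distrib, ← sum_mul, hx, hy, zero_mul, add_zero]
  refine isEig_of_sum_mul_eq (u := fun g => w (g a) (g b)) (fun h => hw ?_) fun g => ?_
  · simpa [w] using congrFun h 1
  · rw [hS.sum_apply_mul_apply_eq hder hab hcd hc hd w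
      (fun i => by simp only [w, hxy, mul_comm (y i), add_zero]) hrow hcol]
    ring

lemma fixCount_eq_zero_iff {σ : Perm (Fin n)} : fixCount n σ = 0 ↔ ∀ x, σ x ≠ x := by
  simp [fixCount, filter_eq_empty_iff]

lemma IsConjClass.isConjInvariant (hS : IsConjClass n S) : IsConjInvariant S := by
  obtain ⟨σ, hσ⟩ := hS
  exact fun s hs g => (hσ _).mpr (((hσ s).mp hs).trans (isConj_iff.mpr ⟨g, rfl⟩))

lemma IsConjClass.sum_card_filter_apply_apply (hS : IsConjClass n S) {σ : Perm (Fin n)}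
    (hσ : σ ∈ S) : ∑ s ∈ S, (#{x | s (s x) = x} : ℝ) = #S * #{x | σ (σ x) = x} := by
  obtain ⟨τ, hτ⟩ := hS
  rw [← nsmul_eq_mul, ← sum_const]
  refine sum_congr rfl fun s hs => ?_
  obtain ⟨c, rfl⟩ := isConj_iff.mp (((hτ σ).mp hσ).symm.trans ((hτ s).mp hs))
  rw [card_filter_apply_apply_conj]

lemma IsConjClass.exists_isEig (hn : 4 ≤ n) (hS : IsConjClass n S)
    (hder : ∀ s ∈ S, ∀ x, s x ≠ x) {σ : Perm (Fin n)} (hσ : σ ∈ S) :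
    (∃ μ, IsEig n S μ ∧ μ * ((n - 1) * (n - 2)) = #S * (2 - #{x | σ (σ x) = x})) ∧
      ∃ μ, IsEig n S μ ∧ μ * (n * (n - 3)) = #S * #{x | σ (σ x) = x} := by
  obtain ⟨a, b, c, d, hab, hcd, hc, hd⟩ :
      ∃ a b c d : Fin n, a ≠ b ∧ c ≠ d ∧ (c ≠ a ∧ c ≠ b) ∧ (d ≠ a ∧ d ≠ b) :=
    ⟨⟨0, by omega⟩, ⟨1, by omega⟩, ⟨2, by omega⟩, ⟨3, by omega⟩, by simp [Fin.ext_iff]⟩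
  have hS' := hS.isConjInvariant
  have hM := hS.sum_card_filter_apply_apply hσ
  refine ⟨⟨_, hS'.isEig_of_antisymm hder hab hcd hc hd (Pi.single a 1 - Pi.single c 1)
      (Pi.single b 1 - Pi.single c 1) (by simp) (by simp) (by simp [*]), ?_⟩,
    ⟨_, hS'.isEig_of_symm hder hab hcd hc hd (Pi.single a 1 - Pi.single c 1)
      (Pi.single b 1 - Pi.single d 1) (by simp) (by simp) ?_ (by simp [*]), ?_⟩⟩
  · have := hS'.antisymm_eigenvalue_mul hder hab hcd hc hd
    rw [hM, Fintype.card_fin] at this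
    linear_combination this
  · intro i
    simp only [Pi.sub_apply, Pi.single_apply]
    split_ifs <;> simp_all
  · have := hS'.symm_eigenvalue_mul hder hab hcd hc hd
    rw [hM, Fintype.card_fin] at this
    linear_combination this

end CayleyGraph

lemma pos_and_lt_of_mul_eq {μ K N x : ℝ} (h : μ * K = N * x) (hN : 0 < N) (hx : 0 < x)
    (hxK : x < K) : 0 < μ ∧ μ < N := by
  have hK : 0 < K := hx.trans hxK
  constructor <;> nlinarith [mul_pos hN hx, mul_lt_mul_of_pos_left hxK hN]

/-- For every `n ≥ 6` and every conjugacy class `S` of `S_n` consisting of derangements,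
`Cay(S_n, S)` has an eigenvalue `λ` with `0 < λ < |S|`. -/
theorem stmt18 (n : ℕ) (hn : 6 ≤ n) (S : Finset (Equiv.Perm (Fin n)))
    (hS : IsConjClass n S) (hfix : ∀ σ ∈ S, fixCount n σ = 0) :
    ∃ lam : ℝ, IsEig n S lam ∧ 0 < lam ∧ lam < (S.card : ℝ) := by
  obtain ⟨σ, hσ⟩ : S.Nonempty := by
    obtain ⟨σ, hσ⟩ := hS
    exact ⟨σ, (hσ σ).mpr (IsConj.refl σ)⟩
  have hder : ∀ s ∈ S, ∀ x, s x ≠ x := fun s hs => fixCount_eq_zero_iff.mp (hfix s hs)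
  obtain ⟨⟨μ₁, hμ₁, h₁⟩, μ₂, hμ₂, h₂⟩ := hS.exists_isEig (by omega) hder hσ
  have hN : (0 : ℝ) < #S := by exact_mod_cast card_pos.mpr ⟨σ, hσ⟩
  have hn' : (6 : ℝ) ≤ n := by exact_mod_cast hn
  have hm : (#{x | σ (σ x) = x} : ℝ) ≤ n := by
    exact_mod_cast (card_filter_le _ _).trans_eq (card_fin n)
  rcases Nat.eq_zero_or_pos #{x | σ (σ x) = x} with hm0 | hm0
  · rw [hm0, Nat.cast_zero, sub_zero] at h₁
    exact ⟨μ₁, hμ₁, pos_and_lt_of_mul_eq h₁ hN two_pos (by nlinarith)⟩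
  · exact ⟨μ₂, hμ₂, pos_and_lt_of_mul_eq h₂ hN (by exact_mod_cast hm0) (by nlinarith)⟩
end
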